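/- The element d_{n,ε} := b_{n,+,ε} + b_{n,-,ε} ∈ TL(D_n)_ε is a non-zero idempotent satisfying s₀d_{n,ε}s₀ = d_{n,ε} and d_{n,ε}U_i = 0 = U_id_{n,ε} for all i = 0,1,…,n-1, where U₀ = s₀U₁s₀. -/

import Mathlib

/-! The element `d_{n,ε} = b_{n,+,ε} + b_{n,-,ε}` lies in `TL(D_n)_ε`, is a
non-zero idempotent, satisfies `s₀ d_{n,ε} s₀ = d_{n,ε}` and
`d_{n,ε} U_i = 0 = U_i d_{n,ε}` for all `i = 0,1,…,n-1`, where `U₀ = s₀U₁s₀`. -/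

noncomputable section

abbrev Kq : Type := RatFunc ℂ

def qq : Kq := RatFunc.X

/-- The quantum integer `[m] = (q^m - q^{-m})/(q - q⁻¹)` in `ℂ(q)`. -/
def qint (m : ℤ) : Kq := (qq ^ m - qq ^ (-m)) / (qq - qq⁻¹)

/-- Generators of the type `B` Temperley–Lieb algebra: `none` is `s₀`, and
`some i` is the cup-cap generator `U_{i+1}`. -/
def g : Option ℕ → FreeAlgebra Kq (Option ℕ) := FreeAlgebra.ι Kq

/-- The defining relations of the (specialized) type `B` Temperley–Lieb
algebra (on infinitely many strands, so that `TL(B_n)` sits inside for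
every `n`): `U_i² = -ε(q+q⁻¹)U_i`, distant commutativity,
`U_i U_{i±1} U_i = U_i`, `s₀² = 1`, `U₁ s₀ U₁ = 0` and `s₀ U_i = U_i s₀`
for `i ≥ 2`.  (Recall `some i` stands for `U_{i+1}`.) -/
inductive TLBRel (ε : Kq) : FreeAlgebra Kq (Option ℕ) → FreeAlgebra Kq (Option ℕ) → Prop
  | Usq (i : ℕ) :
      TLBRel ε (g (some i) * g (some i)) ((-(ε * (qq + qq⁻¹))) • g (some i))
  | Ucomm (i j : ℕ) (h : i + 2 ≤ j) :
      TLBRel ε (g (some i) * g (some j)) (g (some j) * g (some i))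
  | Ubraid1 (i : ℕ) :
      TLBRel ε (g (some i) * g (some (i+1)) * g (some i)) (g (some i))
  | Ubraid2 (i : ℕ) :
      TLBRel ε (g (some (i+1)) * g (some i) * g (some (i+1))) (g (some (i+1)))
  | s0sq : TLBRel ε (g none * g none) 1
  | UsU : TLBRel ε (g (some 0) * g none * g (some 0)) 0
  | scomm (i : ℕ) (h : 1 ≤ i) :
      TLBRel ε (g none * g (some i)) (g (some i) * g none)

/-- The (specialized) type `B` Temperley–Lieb algebra `TL(B)_ε` (on
infinitely many strands). -/
abbrev TLB (ε : Kq) := RingQuot (TLBRel ε)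

/-- The generator `s₀` of `TL(B)_ε`. -/
def s0 (ε : Kq) : TLB ε := RingQuot.mkAlgHom Kq (TLBRel ε) (g none)

/-- The generator `U_i` of `TL(B)_ε`, for `i ≥ 1`. -/
def UU (ε : Kq) (i : ℕ) : TLB ε := RingQuot.mkAlgHom Kq (TLBRel ε) (g (some (i - 1)))

/-- The subalgebra `TL(B_n)_ε ⊆ TL(B)_ε`, generated by `s₀, U₁, …, U_{n-1}`. -/
def TLBsub (ε : Kq) (n : ℕ) : Subalgebra Kq (TLB ε) :=
  Algebra.adjoin Kq ({s0 ε} ∪ {x | ∃ i, 1 ≤ i ∧ i ≤ n - 1 ∧ x = UU ε i})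

/-- The type `D` generators: `UD 0 = U₀ = s₀U₁s₀` and `UD i = U_i` for `i ≥ 1`. -/
def UD (ε : Kq) (i : ℕ) : TLB ε :=
  if i = 0 then s0 ε * UU ε 1 * s0 ε else UU ε i

/-- The subalgebra `TL(D_n)_ε ⊆ TL(B)_ε`, generated by `U₀, U₁, …, U_{n-1}`. -/
def TLDsub (ε : Kq) (n : ℕ) : Subalgebra Kq (TLB ε) :=
  Algebra.adjoin Kq {x | ∃ i ≤ n - 1, x = UD ε i}

/-- The type `B_n` Jones–Wenzl projectors `b_{n,η,ε}` (for `η = ±1`), defined by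
`b_{1,η,ε} = (1 + η s₀)/2` and the recursion
`b_{n+1,η,ε} = b_{n,η,ε} + ε (q^{n-1}+q^{-(n-1)})/(q^n+q^{-n}) · b_{n,η,ε} U_n b_{n,η,ε}`. -/
def bB (ε η : Kq) : ℕ → TLB ε
  | 0 => 1
  | 1 => (2 : Kq)⁻¹ • (1 + η • s0 ε)
  | (n+2) =>
      bB ε η (n+1) +
        (ε * (qq ^ n + qq⁻¹ ^ n) / (qq ^ (n+1) + qq⁻¹ ^ (n+1))) •
          (bB ε η (n+1) * UU ε (n+1) * bB ε η (n+1))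

/-- The type `D_n` Jones–Wenzl projector `d_{n,ε} = b_{n,+,ε} + b_{n,-,ε}`. -/
def dD (ε : Kq) (n : ℕ) : TLB ε := bB ε 1 n + bB ε (-1) n

/-!
Both `b_{n,±}` come out of Wenzl's recursion `B ↦ B + c • B U B`, which preserves
`IsJonesWenzlPair τ B U` (idempotence, `U B U B = τ • U B` and `B U B U = τ • B U`) as long as
`c τ = -1`; this invariant makes the new projector kill the generator used in the step, and
`s₀` acts on `b_{n,η}` by the scalar `η` on both sides. Since `s₀` commutes with `U_i` for
`i ≥ 2`, the different eigenvalues force `b_{n,+} X b_{n,-} = 0` for such `X`, so `d_n` obeys the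
same recursion, starting from `d_2 = 1 + c₀/2 • (U₁ + s₀U₁s₀) ∈ TL(D_2)`. Moreover
`d_n U₀ = (b_{n,+} - b_{n,-}) U₁ s₀ = 0`, and `d_n ≠ 0` because the character `s₀ ↦ 1, U_i ↦ 0`
sends it to `1`.
-/

section JonesWenzlStep

variable {K A : Type*} [Field K] [Ring A] [Algebra K A]

def jwStep (c : K) (B V : A) : A := B + c • (B * V * B)

variable {a c d τ : K} {B V W X : A}

lemma mul_jwStep_of_mul_eq_smul (h : X * B = a • B) :
    X * jwStep c B V = a • jwStep c B V := by
  simp only [jwStep, mul_add, mul_smul_comm, ← mul_assoc, h, smul_mul_assoc, smul_add,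
    smul_comm a c]

lemma jwStep_mul_of_mul_eq_smul (h : B * X = a • B) :
    jwStep c B V * X = a • jwStep c B V := by
  simp only [jwStep, add_mul, smul_mul_assoc, mul_assoc, h, mul_smul_comm, smul_add,
    smul_comm a c]

lemma mul_jwStep_eq_zero (h : X * B = 0) : X * jwStep c B V = 0 := by
  simpa using mul_jwStep_of_mul_eq_smul (a := 0) (c := c) (V := V) (by simpa using h)

lemma jwStep_mul_eq_zero (h : B * X = 0) : jwStep c B V * X = 0 := by
  simpa using jwStep_mul_of_mul_eq_smul (a := 0) (c := c) (V := V) (by simpa using h)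

lemma IsIdempotentElem.mul_jwStep (hB : IsIdempotentElem B) :
    B * jwStep c B V = jwStep c B V := by
  simpa using mul_jwStep_of_mul_eq_smul (a := 1) (c := c) (V := V) (by simpa using hB.eq)

lemma IsIdempotentElem.jwStep_mul (hB : IsIdempotentElem B) :
    jwStep c B V * B = jwStep c B V := by
  simpa using jwStep_mul_of_mul_eq_smul (a := 1) (c := c) (V := V) (by simpa using hB.eq)

lemma Commute.jwStep_right (hB : Commute X B) (hV : Commute X V) :
    Commute X (jwStep c B V) :=
  hB.add_right (((hB.mul_right hV).mul_right hB).smul_right c)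

lemma jwStep_mem {S : Subalgebra K A} (hB : B ∈ S) (hV : V ∈ S) : jwStep c B V ∈ S :=
  add_mem hB (S.smul_mem (mul_mem (mul_mem hB hV) hB) c)

lemma mul_jwStep_mul_of_commute (hB : IsIdempotentElem B) (hWB : Commute W B)
    (hWVW : W * V * W = W) (hWW : W * W = d • W) :
    W * jwStep c B V * W = (c + d) • (B * W) := by
  have hWBVBW : W * (B * V * B) * W = B * W := by
    calc W * (B * V * B) * W = B * (W * V * W) * B := by
          simp only [mul_assoc]; rw [← mul_assoc W B, hWB.eq, mul_assoc B W]
      _ = B * W := by rw [hWVW, mul_assoc, hWB.eq, ← mul_assoc, hB.eq]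
  have hWBW : W * B * W = d • (B * W) := by rw [hWB.eq, mul_assoc, hWW, mul_smul_comm]
  rw [jwStep, mul_add, add_mul, hWBW, mul_smul_comm, smul_mul_assoc, hWBVBW, add_smul, add_comm]

structure IsJonesWenzlPair (τ : K) (B V : A) : Prop where
  isIdempotentElem : IsIdempotentElem B
  mul_mul_mul_left : V * B * V * B = τ • (V * B)
  mul_mul_mul_right : B * V * B * V = τ • (B * V)

namespace IsJonesWenzlPair

lemma mul_jwStep_self (h : IsJonesWenzlPair τ B V) (hcτ : c * τ = -1) :
    V * jwStep c B V = 0 := by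
  simp only [jwStep, mul_add, mul_smul_comm, ← mul_assoc, h.mul_mul_mul_left, smul_smul, hcτ]
  module

lemma jwStep_mul_self (h : IsJonesWenzlPair τ B V) (hcτ : c * τ = -1) :
    jwStep c B V * V = 0 := by
  simp only [jwStep, add_mul, smul_mul_assoc, h.mul_mul_mul_right, smul_smul, hcτ]
  module

lemma isIdempotentElem_jwStep (h : IsJonesWenzlPair τ B V) (hcτ : c * τ = -1) :
    IsIdempotentElem (jwStep c B V) :=
  calc jwStep c B V * jwStep c B V
      = (B + c • (B * V * B)) * jwStep c B V := rfl
    _ = B * jwStep c B V + c • (B * V * (B * jwStep c B V)) := by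
        rw [add_mul, smul_mul_assoc, mul_assoc (B * V)]
    _ = jwStep c B V := by
        rw [h.isIdempotentElem.mul_jwStep, mul_assoc, h.mul_jwStep_self hcτ, mul_zero, smul_zero,
          add_zero]

lemma step (h : IsJonesWenzlPair τ B V) (hcτ : c * τ = -1)
    (hWB : Commute W B) (hWVW : W * V * W = W) (hWW : W * W = d • W) :
    IsJonesWenzlPair (c + d) (jwStep c B V) W where
  isIdempotentElem := h.isIdempotentElem_jwStep hcτ
  mul_mul_mul_left := by
    rw [mul_jwStep_mul_of_commute h.isIdempotentElem hWB hWVW hWW, smul_mul_assoc, ← hWB.eq,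
      mul_assoc, h.isIdempotentElem.mul_jwStep]
  mul_mul_mul_right := by
    rw [mul_assoc, mul_assoc, ← mul_assoc W,
      mul_jwStep_mul_of_commute h.isIdempotentElem hWB hWVW hWW, mul_smul_comm, ← mul_assoc,
      h.isIdempotentElem.jwStep_mul]

end IsJonesWenzlPair

end JonesWenzlStep

section SignProjector

variable {K A : Type*} [Field K] [Ring A] [Algebra K A] {η d : K} {s U : A}

lemma mul_half_one_add_smul (hη : η * η = 1) (hs : s * s = 1) :
    s * ((2 : K)⁻¹ • (1 + η • s)) = η • ((2 : K)⁻¹ • (1 + η • s)) := by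
  simp only [mul_smul_comm, mul_add, mul_one, hs]
  linear_combination (norm := module) hη • (-(2 : K)⁻¹ • s)

lemma half_one_add_smul_mul (hη : η * η = 1) (hs : s * s = 1) :
    (2 : K)⁻¹ • (1 + η • s) * s = η • ((2 : K)⁻¹ • (1 + η • s)) := by
  simp only [smul_mul_assoc, add_mul, one_mul, hs]
  linear_combination (norm := module) hη • (-(2 : K)⁻¹ • s)

lemma isJonesWenzlPair_half_one_add_smul [NeZero (2 : K)] (hη : η * η = 1) (hs : s * s = 1)
    (hU : U * U = d • U) (hUsU : U * s * U = 0) :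
    IsJonesWenzlPair ((2 : K)⁻¹ * d) ((2 : K)⁻¹ • (1 + η • s)) U := by
  have hUpU : U * ((2 : K)⁻¹ • (1 + η • s)) * U = ((2 : K)⁻¹ * d) • U := by
    simp only [mul_smul_comm, smul_mul_assoc, mul_add, add_mul, mul_one, hU, hUsU, smul_zero,
      add_zero, smul_smul]
  refine ⟨?_, by rw [hUpU, smul_mul_assoc],
    by rw [mul_assoc, mul_assoc, ← mul_assoc U, hUpU, mul_smul_comm]⟩
  calc (2 : K)⁻¹ • (1 + η • s) * ((2 : K)⁻¹ • (1 + η • s))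
      = (2 : K)⁻¹ • ((2 : K)⁻¹ • (1 + η • s) + η • (s * ((2 : K)⁻¹ • (1 + η • s)))) := by
        rw [smul_mul_assoc, add_mul, one_mul, smul_mul_assoc]
    _ = (2 : K)⁻¹ • (1 + η • s) := by
        rw [mul_half_one_add_smul hη hs, smul_smul, hη, one_smul, ← two_smul K, smul_smul,
          inv_mul_cancel₀ two_ne_zero, one_smul]

variable [CharZero K]

lemma half_one_add_smul_add_half_one_sub_smul :
    (2 : K)⁻¹ • (1 + (1 : K) • s) + (2 : K)⁻¹ • (1 + (-1 : K) • s) = 1 := by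
  module

lemma half_one_add_smul_sandwich_add :
    (2 : K)⁻¹ • (1 + (1 : K) • s) * U * ((2 : K)⁻¹ • (1 + (1 : K) • s)) +
      (2 : K)⁻¹ • (1 + (-1 : K) • s) * U * ((2 : K)⁻¹ • (1 + (-1 : K) • s)) =
      (2 : K)⁻¹ • (U + s * U * s) := by
  simp only [smul_mul_assoc, mul_smul_comm, add_mul, mul_add, one_mul, mul_one]
  module

end SignProjector

lemma mul_mul_eq_zero_of_eigen {K A : Type*} [Field K] [Ring A] [Algebra K A] {a b : K}
    {S B C X : A} (hB : B * S = a • B) (hC : S * C = b • C) (hab : a ≠ b) (hX : Commute S X) :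
    B * X * C = 0 := by
  have h : (a - b) • (B * X * C) = 0 := by
    calc (a - b) • (B * X * C) = B * S * X * C - B * X * (S * C) := by
          rw [hB, hC, sub_smul, smul_mul_assoc, smul_mul_assoc, mul_smul_comm]
      _ = 0 := by rw [mul_assoc B S, hX.eq, ← mul_assoc, mul_assoc, sub_self]
  exact (smul_eq_zero.mp h).resolve_left (sub_ne_zero.mpr hab)

lemma qq_pow_add_inv_pow_ne_zero (m : ℕ) : qq ^ m + qq⁻¹ ^ m ≠ 0 := by
  have hq : qq ^ m ≠ 0 := pow_ne_zero _ RatFunc.X_ne_zero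
  have hpoly : qq ^ (2 * m) + 1 = algebraMap (Polynomial ℂ) Kq (Polynomial.X ^ (2 * m) + 1) := by
    simp [qq, RatFunc.algebraMap_X]
  have hne : qq ^ (2 * m) + 1 ≠ 0 := by
    rw [hpoly]
    refine RatFunc.algebraMap_ne_zero fun h => ?_
    simpa using congrArg (Polynomial.eval 1) h
  intro h
  apply hne
  calc qq ^ (2 * m) + 1 = (qq ^ m + qq⁻¹ ^ m) * qq ^ m := by
        rw [inv_pow, add_mul, inv_mul_cancel₀ hq, two_mul, pow_add]
    _ = 0 := by rw [h, zero_mul]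

def jwCoeff (ε : Kq) (k : ℕ) : Kq := ε * (qq ^ k + qq⁻¹ ^ k) / (qq ^ (k + 1) + qq⁻¹ ^ (k + 1))

section Coefficients

variable {ε : Kq}

lemma jwCoeff_mul_neg_inv (hε : ε * ε = 1) (k : ℕ) : jwCoeff ε k * -(jwCoeff ε k)⁻¹ = -1 := by
  rw [mul_neg, mul_inv_cancel₀]
  exact div_ne_zero (mul_ne_zero (left_ne_zero_of_mul_eq_one hε) (qq_pow_add_inv_pow_ne_zero k))
    (qq_pow_add_inv_pow_ne_zero (k + 1))

lemma neg_inv_jwCoeff_zero (hε : ε * ε = 1) :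
    -(jwCoeff ε 0)⁻¹ = (2 : Kq)⁻¹ * -(ε * (qq + qq⁻¹)) := by
  have hN := qq_pow_add_inv_pow_ne_zero 1
  have h2 : (2 : Kq) ≠ 0 := two_ne_zero
  rw [← neg_neg ((2 : Kq)⁻¹ * _), inv_eq_of_mul_eq_one_right (b := -((2 : Kq)⁻¹ * _))]
  simp only [jwCoeff, pow_zero, pow_one, zero_add, one_add_one_eq_two] at hN ⊢
  generalize qq + qq⁻¹ = N at *
  field_simp
  linear_combination hε

lemma qq_pow_add_inv_pow_add_two (k : ℕ) :
    qq ^ (k + 2) + qq⁻¹ ^ (k + 2) =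
      (qq + qq⁻¹) * (qq ^ (k + 1) + qq⁻¹ ^ (k + 1)) - (qq ^ k + qq⁻¹ ^ k) := by
  have hq : qq * qq⁻¹ = 1 := mul_inv_cancel₀ RatFunc.X_ne_zero
  generalize qq⁻¹ = r at *
  linear_combination (-(qq ^ k + r ^ k)) * hq

/- `IsJonesWenzlPair.step` turns the scalar `τ_k = -(c_k)⁻¹` into `c_k - ε(q + q⁻¹)`, and the next step
needs it to be `-(c_{k+1})⁻¹` again: this is where the formula for `jwCoeff` comes from. -/
lemma neg_inv_jwCoeff_succ (hε : ε * ε = 1) (k : ℕ) :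
    -(jwCoeff ε (k + 1))⁻¹ = jwCoeff ε k + -(ε * (qq + qq⁻¹)) := by
  have hN₁ := qq_pow_add_inv_pow_ne_zero (k + 1)
  have hN₂ := qq_pow_add_inv_pow_ne_zero (k + 2)
  have hrec := qq_pow_add_inv_pow_add_two k
  rw [← neg_neg (jwCoeff ε k + _), inv_eq_of_mul_eq_one_right (b := -(jwCoeff ε k + _))]
  simp only [jwCoeff] at hN₁ hN₂ hrec ⊢
  generalize qq ^ k + qq⁻¹ ^ k = N₀ at *
  generalize qq ^ (k + 1) + qq⁻¹ ^ (k + 1) = N₁ at *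
  generalize qq ^ (k + 2) + qq⁻¹ ^ (k + 2) = N₂ at *
  generalize qq + qq⁻¹ = N at *
  field_simp
  linear_combination (N * N₁ - N₀) * hε - hrec

end Coefficients

section Relations

variable {ε : Kq}

lemma UU_mul_self (i : ℕ) : UU ε i * UU ε i = -(ε * (qq + qq⁻¹)) • UU ε i := by
  simpa only [UU, map_mul, map_smul] using RingQuot.mkAlgHom_rel Kq (TLBRel.Usq (ε := ε) (i - 1))

lemma commute_UU {i j : ℕ} (hi : 1 ≤ i) (hij : i + 2 ≤ j) : Commute (UU ε i) (UU ε j) := by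
  show UU ε i * UU ε j = UU ε j * UU ε i
  simpa only [UU, map_mul] using
    RingQuot.mkAlgHom_rel Kq (TLBRel.Ucomm (ε := ε) (i - 1) (j - 1) (by omega))

lemma UU_succ_mul_UU_mul_UU_succ {i : ℕ} (hi : 1 ≤ i) :
    UU ε (i + 1) * UU ε i * UU ε (i + 1) = UU ε (i + 1) := by
  simpa only [UU, map_mul, Nat.sub_add_cancel hi, Nat.add_sub_cancel] using
    RingQuot.mkAlgHom_rel Kq (TLBRel.Ubraid2 (ε := ε) (i - 1))

lemma s0_mul_s0 : s0 ε * s0 ε = 1 := by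
  simpa only [s0, map_mul, map_one] using RingQuot.mkAlgHom_rel Kq (TLBRel.s0sq (ε := ε))

lemma UU_one_mul_s0_mul_UU_one : UU ε 1 * s0 ε * UU ε 1 = 0 := by
  simpa only [UU, s0, map_mul, map_zero] using RingQuot.mkAlgHom_rel Kq (TLBRel.UsU (ε := ε))

lemma commute_s0_UU {i : ℕ} (hi : 2 ≤ i) : Commute (s0 ε) (UU ε i) := by
  show s0 ε * UU ε i = UU ε i * s0 ε
  simpa only [UU, s0, map_mul] using
    RingQuot.mkAlgHom_rel Kq (TLBRel.scomm (ε := ε) (i - 1) (by omega))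

end Relations

section TypeBProjectors

variable {ε η : Kq}

lemma bB_one : bB ε η 1 = (2 : Kq)⁻¹ • (1 + η • s0 ε) := rfl

lemma bB_add_two (k : ℕ) :
    bB ε η (k + 2) = jwStep (jwCoeff ε k) (bB ε η (k + 1)) (UU ε (k + 1)) := rfl

lemma s0_mul_bB (hη : η * η = 1) (k : ℕ) : s0 ε * bB ε η (k + 1) = η • bB ε η (k + 1) := by
  induction k with
  | zero => exact mul_half_one_add_smul hη s0_mul_s0
  | succ k ih => exact mul_jwStep_of_mul_eq_smul (K := Kq) ih

lemma bB_mul_s0 (hη : η * η = 1) (k : ℕ) : bB ε η (k + 1) * s0 ε = η • bB ε η (k + 1) := by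
  induction k with
  | zero => exact half_one_add_smul_mul hη s0_mul_s0
  | succ k ih => exact jwStep_mul_of_mul_eq_smul (K := Kq) ih

lemma commute_UU_bB {k m : ℕ} (hm : m + 1 < k) : Commute (UU ε k) (bB ε η (m + 1)) := by
  induction m with
  | zero =>
    exact ((Commute.one_right _).add_right
      (((commute_s0_UU (i := k) (by omega)).symm).smul_right η)).smul_right _
  | succ m ih =>
    exact Commute.jwStep_right (K := Kq) (ih (by omega))
      (commute_UU (i := m + 1) (j := k) (by omega) (by omega)).symm

theorem isJonesWenzlPair_bB (hε : ε * ε = 1) (hη : η * η = 1) (k : ℕ) :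
    IsJonesWenzlPair (-(jwCoeff ε k)⁻¹) (bB ε η (k + 1)) (UU ε (k + 1)) := by
  induction k with
  | zero =>
    rw [neg_inv_jwCoeff_zero hε]
    exact isJonesWenzlPair_half_one_add_smul hη s0_mul_s0 (UU_mul_self 1)
      UU_one_mul_s0_mul_UU_one
  | succ k ih =>
    rw [neg_inv_jwCoeff_succ hε]
    exact ih.step (jwCoeff_mul_neg_inv hε k) (commute_UU_bB (by omega))
      (UU_succ_mul_UU_mul_UU_succ (by omega)) (UU_mul_self _)

lemma UU_mul_bB (hε : ε * ε = 1) (hη : η * η = 1) {i k : ℕ} (hi : 1 ≤ i) (hik : i ≤ k) :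
    UU ε i * bB ε η (k + 1) = 0 := by
  induction k with
  | zero => omega
  | succ k ih =>
    rw [bB_add_two]
    rcases Nat.lt_or_eq_of_le hik with hik | rfl
    · exact mul_jwStep_eq_zero (ih (by omega))
    · exact (isJonesWenzlPair_bB hε hη k).mul_jwStep_self (jwCoeff_mul_neg_inv hε k)

lemma bB_mul_UU (hε : ε * ε = 1) (hη : η * η = 1) {i k : ℕ} (hi : 1 ≤ i) (hik : i ≤ k) :
    bB ε η (k + 1) * UU ε i = 0 := by
  induction k with
  | zero => omega
  | succ k ih =>
    rw [bB_add_two]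
    rcases Nat.lt_or_eq_of_le hik with hik | rfl
    · exact jwStep_mul_eq_zero (ih (by omega))
    · exact (isJonesWenzlPair_bB hε hη k).jwStep_mul_self (jwCoeff_mul_neg_inv hε k)

end TypeBProjectors

lemma bB_mul_mul_bB_eq_zero {η' : Kq} (hη : η * η = 1) (hη' : η' * η' = 1) (hne : η ≠ η')
    {X : TLB ε} (hX : Commute (s0 ε) X) (k : ℕ) : bB ε η (k + 1) * X * bB ε η' (k + 1) = 0 :=
  mul_mul_eq_zero_of_eigen (bB_mul_s0 hη k) (s0_mul_bB hη' k) hne hX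

section TypeDProjectors

variable {ε : Kq}

lemma dD_two : dD ε 2 = 1 + (jwCoeff ε 0 * (2 : Kq)⁻¹) • (UU ε 1 + s0 ε * UU ε 1 * s0 ε) := by
  rw [dD, bB_add_two, bB_add_two, jwStep, jwStep, add_add_add_comm, ← smul_add, bB_one, bB_one,
    half_one_add_smul_add_half_one_sub_smul, half_one_add_smul_sandwich_add, smul_smul]

lemma dD_add_three (k : ℕ) :
    dD ε (k + 3) = jwStep (jwCoeff ε (k + 1)) (dD ε (k + 2)) (UU ε (k + 2)) := by
  have hX : Commute (s0 ε) (UU ε (k + 2)) := commute_s0_UU (by omega)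
  have h₁ : bB ε 1 (k + 2) * UU ε (k + 2) * bB ε (-1) (k + 2) = 0 :=
    bB_mul_mul_bB_eq_zero (by norm_num) (by norm_num) (by norm_num) hX (k + 1)
  have h₂ : bB ε (-1) (k + 2) * UU ε (k + 2) * bB ε 1 (k + 2) = 0 :=
    bB_mul_mul_bB_eq_zero (by norm_num) (by norm_num) (by norm_num) hX (k + 1)
  simp only [dD, bB_add_two (k + 1), jwStep, add_mul, mul_add, h₁, h₂, smul_add, smul_zero,
    add_zero]
  abel

lemma dD_mem_TLDsub (k : ℕ) : dD ε (k + 2) ∈ TLDsub ε (k + 2) := by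
  have hUD {i n : ℕ} (hi : i ≤ n - 1) : UD ε i ∈ TLDsub ε n := Algebra.subset_adjoin ⟨i, hi, rfl⟩
  induction k with
  | zero =>
    rw [dD_two]
    exact add_mem (one_mem _) (Subalgebra.smul_mem _ (add_mem (hUD (i := 1) le_rfl)
      (hUD (i := 0) (Nat.zero_le _))) _)
  | succ k ih =>
    have hmono : TLDsub ε (k + 2) ≤ TLDsub ε (k + 3) :=
      Algebra.adjoin_mono fun x ⟨i, hi, hx⟩ => ⟨i, by omega, hx⟩
    rw [dD_add_three]
    exact jwStep_mem (hmono ih) (hUD (i := k + 2) (n := k + 3) le_rfl)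

lemma isIdempotentElem_dD (hε : ε * ε = 1) (k : ℕ) : IsIdempotentElem (dD ε (k + 1)) := by
  have h₁ : bB ε 1 (k + 1) * bB ε (-1) (k + 1) = 0 := by
    simpa using bB_mul_mul_bB_eq_zero (by norm_num) (by norm_num) (by norm_num)
      (Commute.one_right (s0 ε)) k
  have h₂ : bB ε (-1) (k + 1) * bB ε 1 (k + 1) = 0 := by
    simpa using bB_mul_mul_bB_eq_zero (by norm_num) (by norm_num) (by norm_num)
      (Commute.one_right (s0 ε)) k
  rw [IsIdempotentElem, dD, add_mul, mul_add, mul_add, h₁, h₂,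
    (isJonesWenzlPair_bB hε (by norm_num) k).isIdempotentElem.eq,
    (isJonesWenzlPair_bB hε (by norm_num) k).isIdempotentElem.eq, add_zero, zero_add]

lemma s0_mul_dD_mul_s0 (k : ℕ) : s0 ε * dD ε (k + 1) * s0 ε = dD ε (k + 1) := by
  simp only [dD, mul_add, add_mul, s0_mul_bB (by norm_num : (1 : Kq) * 1 = 1),
    s0_mul_bB (by norm_num : (-1 : Kq) * -1 = 1), smul_mul_assoc,
    bB_mul_s0 (by norm_num : (1 : Kq) * 1 = 1), bB_mul_s0 (by norm_num : (-1 : Kq) * -1 = 1),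
    smul_smul]
  norm_num

lemma dD_mul_UU (hε : ε * ε = 1) {i k : ℕ} (hi : 1 ≤ i) (hik : i ≤ k) :
    dD ε (k + 1) * UU ε i = 0 := by
  rw [dD, add_mul, bB_mul_UU hε (by norm_num) hi hik, bB_mul_UU hε (by norm_num) hi hik, add_zero]

lemma UU_mul_dD (hε : ε * ε = 1) {i k : ℕ} (hi : 1 ≤ i) (hik : i ≤ k) :
    UU ε i * dD ε (k + 1) = 0 := by
  rw [dD, mul_add, UU_mul_bB hε (by norm_num) hi hik, UU_mul_bB hε (by norm_num) hi hik, add_zero]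

lemma dD_mul_s0_mul_UU (hε : ε * ε = 1) {i k : ℕ} (hi : 1 ≤ i) (hik : i ≤ k) :
    dD ε (k + 1) * s0 ε * UU ε i = 0 := by
  rw [dD, add_mul, bB_mul_s0 (by norm_num), bB_mul_s0 (by norm_num), add_mul, smul_mul_assoc,
    smul_mul_assoc, bB_mul_UU hε (by norm_num) hi hik, bB_mul_UU hε (by norm_num) hi hik,
    smul_zero, smul_zero, add_zero]

lemma UU_mul_s0_mul_dD (hε : ε * ε = 1) {i k : ℕ} (hi : 1 ≤ i) (hik : i ≤ k) :
    UU ε i * (s0 ε * dD ε (k + 1)) = 0 := by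
  rw [dD, mul_add, s0_mul_bB (by norm_num), s0_mul_bB (by norm_num), mul_add, mul_smul_comm,
    mul_smul_comm, UU_mul_bB hε (by norm_num) hi hik, UU_mul_bB hε (by norm_num) hi hik,
    smul_zero, smul_zero, add_zero]

lemma dD_mul_UD (hε : ε * ε = 1) {i k : ℕ} (hik : i ≤ k + 1) : dD ε (k + 2) * UD ε i = 0 := by
  rcases Nat.eq_zero_or_pos i with rfl | hi
  · rw [UD, if_pos rfl, ← mul_assoc, ← mul_assoc, dD_mul_s0_mul_UU hε le_rfl (by omega), zero_mul]
  · rw [UD, if_neg hi.ne', dD_mul_UU hε hi hik]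

lemma UD_mul_dD (hε : ε * ε = 1) {i k : ℕ} (hik : i ≤ k + 1) : UD ε i * dD ε (k + 2) = 0 := by
  rcases Nat.eq_zero_or_pos i with rfl | hi
  · rw [UD, if_pos rfl, mul_assoc, mul_assoc, UU_mul_s0_mul_dD hε le_rfl (by omega), mul_zero]
  · rw [UD, if_neg hi.ne', UU_mul_dD hε hi hik]

end TypeDProjectors

def trivialChar (ε : Kq) : TLB ε →ₐ[Kq] Kq :=
  RingQuot.liftAlgHom Kq ⟨FreeAlgebra.lift Kq fun o => o.elim 1 fun _ => 0,
    fun _ _ h => by induction h <;> simp [g]⟩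

section TrivialChar

variable {ε η : Kq}

lemma trivialChar_s0 : trivialChar ε (s0 ε) = 1 := by
  simp [trivialChar, s0, g]

lemma trivialChar_UU (i : ℕ) : trivialChar ε (UU ε i) = 0 := by
  simp [trivialChar, UU, g]

lemma trivialChar_bB (k : ℕ) : trivialChar ε (bB ε η (k + 1)) = (2 : Kq)⁻¹ * (1 + η) := by
  induction k with
  | zero => simp [bB_one, trivialChar_s0, mul_add]
  | succ k ih => simp [bB_add_two, jwStep, trivialChar_UU, ih]

lemma dD_ne_zero (k : ℕ) : dD ε (k + 1) ≠ 0 := fun h => by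
  have h2 : (2 : Kq) ≠ 0 := two_ne_zero
  simpa [dD, trivialChar_bB, one_add_one_eq_two, h2] using congrArg (trivialChar ε) h

end TrivialChar

theorem stmt14 (ε : Kq) (hε : ε = 1 ∨ ε = -1) (n : ℕ) (hn : 2 ≤ n) :
    dD ε n ∈ TLDsub ε n ∧ dD ε n ≠ 0 ∧ IsIdempotentElem (dD ε n) ∧
    s0 ε * dD ε n * s0 ε = dD ε n ∧
    ∀ i : ℕ, i ≤ n - 1 → dD ε n * UD ε i = 0 ∧ UD ε i * dD ε n = 0 := by
  have hε' : ε * ε = 1 := by rcases hε with rfl | rfl <;> norm_num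
  obtain ⟨k, rfl⟩ : ∃ k, n = k + 2 := ⟨n - 2, by omega⟩
  exact ⟨dD_mem_TLDsub k, dD_ne_zero (k + 1), isIdempotentElem_dD hε' (k + 1),
    s0_mul_dD_mul_s0 (k + 1), fun i hi => ⟨dD_mul_UD hε' (by omega), UD_mul_dD hε' (by omega)⟩⟩

end
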